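/- Let T be a tetrahedron in ℝ³ with vertices v₀, v₁, v₂, v₃ and let x be the circumcenter of T (the unique point equidistant from all four vertices, assuming the vertices are affinely independent). Then at most one vertex v of T is 'negative', i.e., at most one vertex is strictly separated from x by the plane through the opposite face, provided all edge lengths of T are at most 2√2 and at least 2. -/

import Mathlib

open Finset
open scoped RealInnerProductSpace

/-!
Write the circumcentre `x` in barycentric coordinates `w` with respect to the vertices; a vertex
is negative exactly when its coordinate is negative. Leibniz's identity
`∑ m, w m * |v i - v m|² = |v i - x|² + ∑ m, w m * |x - v m|² = 2 R²` is a linear system for `w`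
whose coefficients are the squared edge lengths. If `w 0, w 1 < 0`, the equations for the
vertices `0, 1` minus those for `2, 3` form a sum of four terms that are nonnegative because
`d₀₁² ≤ 8 ≤ d₀₂² + d₀₃²` and so on. They all vanish only when `v 0, v 2, v 1, v 3` is a square
with side `2` and diagonals `2√2`, which is planar.
-/

theorem AffineMap.apply_affineCombination_eq_mul {ι V P : Type*} [Fintype ι] [AddCommGroup V]
    [Module ℝ V] [AddTorsor V P] (f : P →ᵃ[ℝ] ℝ) (v : ι → P) {w : ι → ℝ} (hw : ∑ i, w i = 1)
    {i : ι} (hf : ∀ j, j ≠ i → f (v j) = 0) :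
    f (univ.affineCombination ℝ v w) = w i * f (v i) := by
  rw [univ.map_affineCombination v w hw, univ.affineCombination_eq_linear_combination _ w hw,
    Fintype.sum_eq_single i fun j hj => by simp [hf j hj]]
  rfl

theorem weight_neg_of_separates {ι V P : Type*} [Fintype ι] [AddCommGroup V]
    [Module ℝ V] [AddTorsor V P] (f : P →ᵃ[ℝ] ℝ) (v : ι → P) {w : ι → ℝ} (hw : ∑ i, w i = 1)
    {i : ι} (hf : ∀ j, j ≠ i → f (v j) = 0) (hfi : f (v i) < 0)
    (hfx : 0 < f (univ.affineCombination ℝ v w)) : w i < 0 :=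
  neg_of_mul_pos_left (f.apply_affineCombination_eq_mul v hw hf ▸ hfx) hfi.le

theorem nonneg_of_mul_add_mul_add_mul_nonneg {a b c r t u : ℝ} (ha : a < 0) (hb : b < 0)
    (hr : 0 < r) (ht : 0 < t) (hu : 0 < u) (h : 0 ≤ a * r + b * t + c * u) : 0 ≤ c := by
  by_contra! hc
  linarith [mul_neg_of_neg_of_pos ha hr, mul_neg_of_neg_of_pos hb ht,
    mul_neg_of_neg_of_pos hc hu]

/-- `p, q, r, s, t, u` stand for the squared edge lengths `d₀₁², d₀₂², d₀₃², d₁₂², d₁₃², d₂₃²`. -/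
theorem add_add_add_eq_add_of_neg_of_neg {a b c d p q r s t u K : ℝ}
    (hsum : a + b + c + d = 1) (ha : a < 0) (hb : b < 0)
    (hp : 4 ≤ p ∧ p ≤ 8) (hq : 4 ≤ q ∧ q ≤ 8) (hr : 4 ≤ r ∧ r ≤ 8)
    (hs : 4 ≤ s ∧ s ≤ 8) (ht : 4 ≤ t ∧ t ≤ 8) (hu : 4 ≤ u ∧ u ≤ 8) (hK : 0 ≤ K)
    (e₀ : b * p + c * q + d * r = K) (e₁ : a * p + c * s + d * t = K)
    (e₂ : a * q + b * s + d * u = K) (e₃ : a * r + b * t + c * u = K) :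
    q + r + s + t = p + u := by
  have hc : 0 ≤ c := nonneg_of_mul_add_mul_add_mul_nonneg ha hb (by linarith) (by linarith)
    (by linarith) (e₃ ▸ hK)
  have hd : 0 ≤ d := nonneg_of_mul_add_mul_add_mul_nonneg ha hb (by linarith) (by linarith)
    (by linarith) (e₂ ▸ hK)
  have hzero : a * (p - q - r) + b * (p - s - t) + c * (q + s - u) + d * (r + t - u) = 0 := by
    linear_combination e₀ + e₁ - e₂ - e₃
  have ha' : 0 ≤ a * (p - q - r) := mul_nonneg_of_nonpos_of_nonpos ha.le (by linarith)
  have hb' : 0 ≤ b * (p - s - t) := mul_nonneg_of_nonpos_of_nonpos hb.le (by linarith)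
  have hc' : 0 ≤ c * (q + s - u) := mul_nonneg hc (by linarith)
  have hd' : 0 ≤ d * (r + t - u) := mul_nonneg hd (by linarith)
  have hpqr : p - q - r = 0 :=
    (mul_eq_zero.mp (show a * (p - q - r) = 0 by linarith)).resolve_left ha.ne
  have hpst : p - s - t = 0 :=
    (mul_eq_zero.mp (show b * (p - s - t) = 0 by linarith)).resolve_left hb.ne
  obtain ⟨rfl, rfl, rfl, rfl, rfl⟩ : p = 8 ∧ q = 4 ∧ r = 4 ∧ s = 4 ∧ t = 4 := by
    refine ⟨?_, ?_, ?_, ?_, ?_⟩ <;> linarith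
  have h8u : 8 - u = 0 :=
    (mul_eq_zero.mp (show (c + d) * (8 - u) = 0 by linear_combination hzero)).resolve_left
      (by linarith)
  linarith

section InnerProductSpace

variable {V : Type*} [NormedAddCommGroup V] [InnerProductSpace ℝ V]

theorem sum_mul_dist_sq_eq {ι : Type*} [Fintype ι] (v : ι → V) {w : ι → ℝ}
    (hw : ∑ i, w i = 1) {x : V} (hx : ∑ i, w i • v i = x) (y : V) :
    ∑ i, w i * dist y (v i) ^ 2 = dist y x ^ 2 + ∑ i, w i * dist x (v i) ^ 2 := by
  have hcentre : ∑ i, w i • (x - v i) = 0 := by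
    simp only [smul_sub, sum_sub_distrib, ← sum_smul, hw, one_smul, hx, sub_self]
  have hsplit : ∀ i, dist y (v i) ^ 2 = dist y x ^ 2 + 2 * ⟪y - x, x - v i⟫ + dist x (v i) ^ 2 := by
    intro i
    rw [dist_eq_norm, dist_eq_norm, dist_eq_norm, ← norm_add_sq_real, sub_add_sub_cancel]
  have hcross : ∑ i, w i * ⟪y - x, x - v i⟫ = 0 := by
    simp only [← real_inner_smul_right, ← inner_sum, hcentre, inner_zero_right]
  simp only [hsplit, mul_add, sum_add_distrib, ← sum_mul, hw, one_mul, mul_left_comm _ (2 : ℝ),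
    ← mul_sum, hcross, mul_zero, add_zero]

theorem norm_add_sub_sub_sq (a b c d : V) :
    ‖a + b - c - d‖ ^ 2 = dist a c ^ 2 + dist a d ^ 2 + dist b c ^ 2 + dist b d ^ 2
      - dist a b ^ 2 - dist c d ^ 2 := by
  simp only [dist_eq_norm, ← real_inner_self_eq_norm_sq, inner_add_left, inner_sub_left,
    inner_add_right, inner_sub_right]
  linarith [real_inner_comm a b, real_inner_comm a c, real_inner_comm a d, real_inner_comm b c,
    real_inner_comm b d, real_inner_comm c d]

theorem AffineIndependent.add_ne_add {v : Fin 4 → V} (h : AffineIndependent ℝ v) :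
    v 0 + v 1 ≠ v 2 + v 3 := by
  intro heq
  have hcomb : ∑ i, ![(1 : ℝ), 1, -1, -1] i • v i = 0 := by
    simp [Fin.sum_univ_four, heq]
  have := affineIndependent_iff.mp h univ ![1, 1, -1, -1] (by simp [Fin.sum_univ_four]) hcomb 0
    (mem_univ 0)
  norm_num at this

theorem not_weight_zero_neg_and_weight_one_neg {v : Fin 4 → V} (hindep : AffineIndependent ℝ v)
    (hedge : ∀ i j, i ≠ j → 4 ≤ dist (v i) (v j) ^ 2 ∧ dist (v i) (v j) ^ 2 ≤ 8)
    {w : Fin 4 → ℝ} (hw : ∑ i, w i = 1) {x : V} (hx : ∑ i, w i • v i = x) {R : ℝ}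
    (hR : ∀ i, dist x (v i) = R) : ¬ (w 0 < 0 ∧ w 1 < 0) := by
  rintro ⟨h₀, h₁⟩
  have hsys : ∀ i, ∑ m, w m * dist (v i) (v m) ^ 2 = 2 * R ^ 2 := fun i => by
    rw [sum_mul_dist_sq_eq v hw hx, dist_comm, hR]
    simp only [hR, ← sum_mul, hw]
    ring
  have e₀ := hsys 0
  have e₁ := hsys 1
  have e₂ := hsys 2
  have e₃ := hsys 3
  simp only [Fin.sum_univ_four, dist_self, ne_eq, OfNat.ofNat_ne_zero, not_false_eq_true, zero_pow,
    mul_zero, zero_add, add_zero] at e₀ e₁ e₂ e₃ hw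
  rw [dist_comm (v 1) (v 0)] at e₁
  rw [dist_comm (v 2) (v 0), dist_comm (v 2) (v 1)] at e₂
  rw [dist_comm (v 3) (v 0), dist_comm (v 3) (v 1), dist_comm (v 3) (v 2)] at e₃
  have hsq := add_add_add_eq_add_of_neg_of_neg hw h₀ h₁ (hedge 0 1 (by decide))
    (hedge 0 2 (by decide)) (hedge 0 3 (by decide)) (hedge 1 2 (by decide))
    (hedge 1 3 (by decide)) (hedge 2 3 (by decide)) (by positivity)
    e₀ e₁ e₂ e₃
  apply hindep.add_ne_add
  rw [← sub_eq_zero, sub_add_eq_sub_sub, ← norm_eq_zero, ← pow_eq_zero_iff two_ne_zero,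
    norm_add_sub_sub_sq]
  linarith

theorem subsingleton_setOf_weight_neg {v : Fin 4 → V} (hindep : AffineIndependent ℝ v)
    (hedge : ∀ i j, i ≠ j → 4 ≤ dist (v i) (v j) ^ 2 ∧ dist (v i) (v j) ^ 2 ≤ 8)
    {w : Fin 4 → ℝ} (hw : ∑ i, w i = 1) {x : V} (hx : ∑ i, w i • v i = x) {R : ℝ}
    (hR : ∀ i, dist x (v i) = R) : {i | w i < 0}.Subsingleton := by
  intro i hi j hj
  by_contra hij
  have hperm : ∀ i j : Fin 4, i ≠ j → ∃ σ : Equiv.Perm (Fin 4), σ 0 = i ∧ σ 1 = j := by decide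
  obtain ⟨σ, rfl, rfl⟩ := hperm i j hij
  refine not_weight_zero_neg_and_weight_one_neg (v := v ∘ σ) (w := w ∘ σ)
    (hindep.comp_embedding σ.toEmbedding) (fun a b hab => hedge _ _ (σ.injective.ne hab))
    ?_ ?_ (fun a => hR _) ⟨hi, hj⟩
  · rw [← hw]; exact Equiv.sum_comp σ w
  · rw [← hx]; exact Equiv.sum_comp σ fun i => w i • v i

end InnerProductSpace

/-- A tetrahedron with affinely independent vertices, all edge lengths in `[2, 2√2]`,
and circumcenter `x`, has at most one "negative" vertex, i.e. at most one vertex that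
is strictly separated from `x` by the plane through the opposite face. -/
theorem at_most_one_negative_vertex (v : Fin 4 → EuclideanSpace ℝ (Fin 3))
    (hindep : AffineIndependent ℝ v)
    (hedge : ∀ i j, i ≠ j →
      2 ≤ dist (v i) (v j) ∧ dist (v i) (v j) ≤ 2 * Real.sqrt 2)
    (x : EuclideanSpace ℝ (Fin 3))
    (hx : ∀ i j : Fin 4, dist x (v i) = dist x (v j)) :
    {i : Fin 4 | ∃ f : EuclideanSpace ℝ (Fin 3) →ᵃ[ℝ] ℝ,
        (∀ j, j ≠ i → f (v j) = 0) ∧ f (v i) < 0 ∧ 0 < f x}.Subsingleton := by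
  have hedge_sq : ∀ i j, i ≠ j → 4 ≤ dist (v i) (v j) ^ 2 ∧ dist (v i) (v j) ^ 2 ≤ 8 := by
    intro i j hij
    obtain ⟨hlo, hhi⟩ := hedge i j hij
    refine ⟨by nlinarith, ?_⟩
    calc dist (v i) (v j) ^ 2 ≤ (2 * Real.sqrt 2) ^ 2 := pow_le_pow_left₀ dist_nonneg hhi 2
      _ = 8 := by rw [mul_pow, Real.sq_sqrt zero_le_two]; norm_num
  have hspan : affineSpan ℝ (Set.range v) = ⊤ :=
    hindep.affineSpan_eq_top_iff_card_eq_finrank_add_one.mpr (by simp)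
  obtain ⟨w, hw, rfl⟩ :=
    eq_affineCombination_of_mem_affineSpan_of_fintype (hspan ▸ AffineSubspace.mem_top ℝ _ x)
  refine (subsingleton_setOf_weight_neg hindep hedge_sq hw
    (univ.affineCombination_eq_linear_combination v w hw).symm (fun i => hx i 0)).anti ?_
  rintro i ⟨f, hf, hfi, hfx⟩
  exact weight_neg_of_separates f v hw hf hfi hfx
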